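/- arXiv:0802.1954 — 2 statements merged into one kernel-verified Lean document; each statement's English description precedes it below -/
import Mathlib

section
/- Substitution of a principal derivative strictly lowers the top: if u^j_K with (j,K) = (i^α, J^α L) is the ≤-highest principal derivative occurring in an expression Q, then all principal derivatives occurring in the expression obtained by substituting u^j_K := D_L P^α into Q are strictly ≤-smaller than (j,K). -/
open MvPolynomial

/-- Jet variables: the independent variables `x i` and the derivatives `u^α_K`. -/
abbrev JetVar (p q : ℕ) := Sum (Fin p) (Fin q × (Fin p →₀ ℕ))

/-- The ring `A` of differential (polynomial) functions on the jet manifold. -/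
abbrev JetRing (p q : ℕ) := MvPolynomial (JetVar p q) ℚ

/-- The total differential operator `D_i = ∂/∂x_i + Σ_{α,K} u^α_{Ki} ∂/∂u^α_K`. -/
noncomputable def totalD (p q : ℕ) (i : Fin p) :
    Derivation ℚ (JetRing p q) (JetRing p q) :=
  MvPolynomial.mkDerivation ℚ (fun v => match v with
    | Sum.inl j => if i = j then 1 else 0
    | Sum.inr (α, K) => X (Sum.inr (α, K + Finsupp.single i 1)))

/-- The multi total differential operator `D_K = D_1^{K_1} ∘ ⋯ ∘ D_p^{K_p}`. -/
noncomputable def DmultiK (p q : ℕ) (K : Fin p →₀ ℕ) :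
    Module.End ℚ (JetRing p q) :=
  (List.finRange p).foldr (fun i f => ((totalD p q i).toLinearMap ^ (K i)) * f) 1

/-- A system of PDEs `u^{i^α}_{J^α} = P^α` together with a ranking `rk` on
`ℕ_q × ℕ^p`: a total order which is positive and compatible with addition,
and with all `J^α ≠ 0`. -/
structure OrthoSystem (p q n : ℕ) where
  ii : Fin n → Fin q
  JJ : Fin n → (Fin p →₀ ℕ)
  P : Fin n → JetRing p q
  rk : (Fin q × (Fin p →₀ ℕ)) → (Fin q × (Fin p →₀ ℕ)) → Prop
  rk_refl : ∀ a, rk a a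
  rk_total : ∀ a b, rk a b ∨ rk b a
  rk_antisymm : ∀ a b, rk a b → rk b a → a = b
  rk_trans : ∀ a b c, rk a b → rk b c → rk a c
  rk_pos : ∀ (j : Fin q) (K L : Fin p →₀ ℕ), rk (j, K) (j, K + L)
  rk_compat : ∀ (i j : Fin q) (J K L : Fin p →₀ ℕ),
    rk (i, J) (j, K) ↔ rk (i, J + L) (j, K + L)
  J_ne : ∀ α, JJ α ≠ 0

variable {p q n : ℕ}

/-- The strict part of the ranking. -/
def OrthoSystem.rlt (S : OrthoSystem p q n) (a b : Fin q × (Fin p →₀ ℕ)) : Prop :=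
  S.rk a b ∧ a ≠ b

/-- A derivative `u^j_K` is principal if `(j,K) = (i^α, J^α L)` for some `α, L`. -/
def OrthoSystem.principal (S : OrthoSystem p q n) (v : Fin q × (Fin p →₀ ℕ)) : Prop :=
  ∃ (α : Fin n) (L : Fin p →₀ ℕ), v = (S.ii α, S.JJ α + L)

/-- `Q` belongs to the subring `B` of functions of parametric derivatives only. -/
def OrthoSystem.inB (S : OrthoSystem p q n) (Q : JetRing p q) : Prop :=
  ∀ (jK : Fin q × (Fin p →₀ ℕ)), Sum.inr jK ∈ Q.vars → ¬ S.principal jK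

/-- Orthonomy: `P^α` depends only on parametric derivatives `u^j_K` with
`(j,K) < (i^α, J^α)`. -/
def OrthoSystem.orthonomic (S : OrthoSystem p q n) : Prop :=
  ∀ (α : Fin n) (jK : Fin q × (Fin p →₀ ℕ)), Sum.inr jK ∈ (S.P α).vars →
    ¬ S.principal jK ∧ S.rlt jK (S.ii α, S.JJ α)

/-- Passivity: `(i^α, J^α K) = (i^β, J^β L)` implies `D_K P^α = D_L P^β`. -/
def OrthoSystem.passive (S : OrthoSystem p q n) : Prop :=
  ∀ (α β : Fin n) (K L : Fin p →₀ ℕ),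
    (S.ii α, S.JJ α + K) = (S.ii β, S.JJ β + L) →
    DmultiK p q K (S.P α) = DmultiK p q L (S.P β)

/-- The differential ideal generated by the `Δ^α = u^{i^α}_{J^α} − P^α`. -/
noncomputable def OrthoSystem.diffIdeal (S : OrthoSystem p q n) : Ideal (JetRing p q) :=
  Ideal.span { x | ∃ (α : Fin n) (L : Fin p →₀ ℕ),
    x = DmultiK p q L (X (Sum.inr (S.ii α, S.JJ α)) - S.P α) }

open Classical in
/-- The reduction `Q ↦ Q̃`: the element of `B` congruent to `Q` modulo the
differential ideal generated by `Δ` (when it exists). -/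
noncomputable def OrthoSystem.red (S : OrthoSystem p q n) (Q : JetRing p q) :
    JetRing p q :=
  if h : ∃ R, S.inB R ∧ Q - R ∈ S.diffIdeal then h.choose else 0

/-- The intrinsic multi-differential operator `𝔇_K P = (D_K P)~`. -/
noncomputable def OrthoSystem.dfrakK (S : OrthoSystem p q n) (K : Fin p →₀ ℕ)
    (Q : JetRing p q) : JetRing p q :=
  S.red (DmultiK p q K Q)

/-- The intrinsic total differential operator `𝔇_j P = (D_j P)~`. -/
noncomputable def OrthoSystem.dfrak (S : OrthoSystem p q n) (j : Fin p)
    (Q : JetRing p q) : JetRing p q :=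
  S.red (totalD p q j Q)

open Classical in
/-- The intrinsic prolongation `𝔭𝔯_Q = Σ_{(j,K)∈S} (𝔇_K Q^j) ∂/∂u^j_K`. -/
noncomputable def OrthoSystem.iprolong (S : OrthoSystem p q n)
    (Q : Fin q → JetRing p q) : Derivation ℚ (JetRing p q) (JetRing p q) :=
  MvPolynomial.mkDerivation ℚ (fun v => match v with
    | Sum.inl _ => 0
    | Sum.inr (j, K) => if S.principal (j, K) then 0 else S.dfrakK K (Q j))

/-! By orthonomy every derivative occurring in `P^α` lies strictly below `(i^α, J^α)`. A total
derivative `D_m` shifts each derivative, and the bound, by `e_m`; compatibility of the ranking keeps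
the inequalities strict, and positivity lets the old variables stay below the new bound. Hence
every derivative in `D_L P^α` lies strictly below `(i^α, J^α L)`, while the remaining variables
of the substituted expression are variables of `Q` other than `u^j_K`. -/

namespace MvPolynomial

theorem derivation_mem_supported {R σ : Type*} [CommSemiring R]
    {D : Derivation R (MvPolynomial σ R) (MvPolynomial σ R)} {s t : Set σ} (hst : s ⊆ t)
    (hD : ∀ v ∈ s, D (X v) ∈ supported R t) {f : MvPolynomial σ R}
    (hf : f ∈ supported R s) : D f ∈ supported R t := by
  rw [supported_eq_adjoin_X] at hf
  induction hf using Algebra.adjoin_induction with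
  | mem x hx =>
    obtain ⟨v, hv, rfl⟩ := hx
    exact hD v hv
  | algebraMap r => simp
  | add x y _ _ hx hy => simpa only [map_add] using add_mem hx hy
  | mul x y hx' hy' hx hy =>
    rw [Derivation.leibniz, smul_eq_mul, smul_eq_mul]
    exact add_mem (mul_mem (supported_mono hst hx') hy) (mul_mem (supported_mono hst hy') hx)

end MvPolynomial

theorem DmultiK_induction {Φ : JetRing p q → (Fin p →₀ ℕ) → Prop}
    (step : ∀ i R M, Φ R M → Φ (totalD p q i R) (M + Finsupp.single i 1))
    (K : Fin p →₀ ℕ) {R : JetRing p q} {M : Fin p →₀ ℕ} (hR : Φ R M) :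
    Φ (DmultiK p q K R) (M + K) := by
  have pow_step : ∀ i k R M, Φ R M →
      Φ (((totalD p q i).toLinearMap ^ k) R) (M + Finsupp.single i k) := by
    intro i k
    induction k with
    | zero => simp
    | succ k ih =>
      intro R M hR
      rw [pow_succ', Module.End.mul_apply, Derivation.coeFn_coe, Finsupp.single_add, ← add_assoc]
      exact step _ _ _ (ih R M hR)
  have list_step : ∀ (l : List (Fin p)) R M, Φ R M →
      Φ ((l.foldr (fun i f => ((totalD p q i).toLinearMap ^ (K i)) * f) 1) R)
        (M + (l.map fun i => Finsupp.single i (K i)).sum) := by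
    intro l
    induction l with
    | nil => simp
    | cons i l ih =>
      intro R M hR
      rw [List.foldr_cons, Module.End.mul_apply, List.map_cons, List.sum_cons,
        add_comm (Finsupp.single _ _), ← add_assoc]
      exact pow_step _ _ _ _ (ih R M hR)
  have hK : ((List.finRange p).map fun i => Finsupp.single i (K i)).sum = K := by
    rw [← Fin.sum_univ_def, Finsupp.univ_sum_single]
  simpa only [DmultiK, hK] using list_step (List.finRange p) R M hR

namespace OrthoSystem

variable (S : OrthoSystem p q n)

theorem rlt_of_rlt_of_rk {a b c : Fin q × (Fin p →₀ ℕ)} (hab : S.rlt a b) (hbc : S.rk b c) :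
    S.rlt a c := by
  refine ⟨S.rk_trans _ _ _ hab.1 hbc, ?_⟩
  rintro rfl
  exact hab.2 (S.rk_antisymm _ _ hab.1 hbc)

theorem rlt_add_right {i j : Fin q} {J K : Fin p →₀ ℕ} (h : S.rlt (j, K) (i, J))
    (L : Fin p →₀ ℕ) : S.rlt (j, K + L) (i, J + L) := by
  refine ⟨(S.rk_compat j i K J L).mp h.1, fun he => h.2 ?_⟩
  obtain ⟨rfl, hKJ⟩ := Prod.mk.inj he
  rw [add_right_cancel hKJ]

/-- The independent variables `x_i` count as lying below every bound. -/
def lowerVars (b : Fin q × (Fin p →₀ ℕ)) : Set (JetVar p q) :=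
  {v | ∀ jK, v = Sum.inr jK → S.rlt jK b}

theorem lowerVars_subset_add (i : Fin q) (J L : Fin p →₀ ℕ) :
    S.lowerVars (i, J) ⊆ S.lowerVars (i, J + L) :=
  fun _ hv jK h => S.rlt_of_rlt_of_rk (hv jK h) (S.rk_pos i J L)

theorem totalD_mem_supported_lowerVars {i : Fin q} {J : Fin p →₀ ℕ} {R : JetRing p q}
    (hR : R ∈ supported ℚ (S.lowerVars (i, J))) (m : Fin p) :
    totalD p q m R ∈ supported ℚ (S.lowerVars (i, J + Finsupp.single m 1)) := by
  refine derivation_mem_supported (S.lowerVars_subset_add _ _ _) ?_ hR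
  rintro (x | ⟨j, K⟩) hv
  · rw [totalD, mkDerivation_X]
    dsimp only
    split_ifs
    exacts [one_mem _, zero_mem _]
  · rw [totalD, mkDerivation_X, X_mem_supported]
    rintro _ ⟨⟩
    exact S.rlt_add_right (hv _ rfl) _

theorem DmultiK_mem_supported_lowerVars {i : Fin q} {J : Fin p →₀ ℕ} {R : JetRing p q}
    (hR : R ∈ supported ℚ (S.lowerVars (i, J))) (L : Fin p →₀ ℕ) :
    DmultiK p q L R ∈ supported ℚ (S.lowerVars (i, J + L)) :=
  DmultiK_induction (Φ := fun R M => R ∈ supported ℚ (S.lowerVars (i, M)))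
    (fun m _ _ hR => S.totalD_mem_supported_lowerVars hR m) L hR

theorem P_mem_supported_lowerVars (hS : S.orthonomic) (α : Fin n) :
    S.P α ∈ supported ℚ (S.lowerVars (S.ii α, S.JJ α)) :=
  mem_supported.2 fun _ hv jK h => (hS α jK (h ▸ hv)).2

end OrthoSystem

theorem subst_lowers_top_general (S : OrthoSystem p q n) (hS : S.orthonomic)
    (Q : JetRing p q) (jK : Fin q × (Fin p →₀ ℕ)) (α : Fin n) (L : Fin p →₀ ℕ)
    (hjK : jK = (S.ii α, S.JJ α + L))
    (hmax : ∀ jK' : Fin q × (Fin p →₀ ℕ), Sum.inr jK' ∈ Q.vars →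
      S.principal jK' → S.rk jK' jK) :
    ∀ jK' : Fin q × (Fin p →₀ ℕ),
      Sum.inr jK' ∈ (MvPolynomial.aeval
        (fun v => if v = Sum.inr jK then DmultiK p q L (S.P α) else X v) Q).vars →
      S.principal jK' → S.rlt jK' jK := by
  intro jK' hjK' hprincipal
  obtain ⟨v, hvQ, hv⟩ := mem_vars_bind₁ _ Q hjK'
  by_cases hv_top : v = Sum.inr jK
  · rw [if_pos hv_top] at hv
    have hlower := S.DmultiK_mem_supported_lowerVars (S.P_mem_supported_lowerVars hS α) L
    rw [← hjK] at hlower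
    exact mem_supported.1 hlower hv jK' rfl
  · rw [if_neg hv_top, vars_X, Finset.mem_singleton] at hv
    subst hv
    exact ⟨hmax jK' hvQ hprincipal, fun h => hv_top (h ▸ rfl)⟩

/-- Substitution of a principal derivative strictly lowers the top: if
`u^j_K` with `(j,K) = (i^α, J^α L)` is the `≤`-highest principal derivative
occurring in `Q`, then every principal derivative occurring in the expression
obtained by substituting `u^j_K := D_L P^α` into `Q` is strictly `≤`-smaller
than `(j,K)`. -/
theorem subst_lowers_top (S : OrthoSystem p q n) (hS : S.orthonomic)
    (Q : JetRing p q) (jK : Fin q × (Fin p →₀ ℕ)) (α : Fin n) (L : Fin p →₀ ℕ)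
    (hjK : jK = (S.ii α, S.JJ α + L))
    (hmem : Sum.inr jK ∈ Q.vars)
    (hmax : ∀ jK' : Fin q × (Fin p →₀ ℕ), Sum.inr jK' ∈ Q.vars →
      S.principal jK' → S.rk jK' jK) :
    ∀ jK' : Fin q × (Fin p →₀ ℕ),
      Sum.inr jK' ∈ (MvPolynomial.aeval
        (fun v => if v = Sum.inr jK then DmultiK p q L (S.P α) else X v) Q).vars →
      S.principal jK' → S.rlt jK' jK :=
  subst_lowers_top_general S hS Q jK α L hjK hmax
end

section
/- Differentiation is compatible with reduction: for any Q ∈ A and any multi-index K, the reduction of D_K Q equals the reduction of D_K applied to the reduction of Q, i.e. (D_K Q)~ = (D_K Q̃)~. -/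
open MvPolynomial

variable {p q n : ℕ}

/-!
Both reductions lie in `B`, and their difference lies in the differential ideal, which is stable
under every `D_K`. So it suffices that `B` meets the ideal only in `0`. Replace each principal
derivative `u^{i^α}_{J^α + L}` by the image of `D_L P^α` under the same substitution, recursively
along the ranking; the ranking is well founded by Dickson's lemma, since it extends the
componentwise order. Passivity makes the substitution independent of the choice of `(α, L)`.
The resulting algebra map fixes `B` and kills every `D_L Δ^α`, hence the whole ideal.
-/

theorem List.foldr_pow_add_single_mul {M ι : Type*} [Monoid M] [DecidableEq ι] (f : ι → M)
    (i : ι) (hf : ∀ a, Commute (f i) (f a)) (e : ι →₀ ℕ) (l : List ι) :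
    l.foldr (fun j g => f j ^ (e + Finsupp.single i 1 : ι →₀ ℕ) j * g) 1
      = f i ^ l.count i * l.foldr (fun j g => f j ^ e j * g) 1 := by
  induction l with
  | nil => simp
  | cons a t ih =>
    rw [List.foldr_cons, List.foldr_cons, ih, List.count_cons, Finsupp.add_apply,
      Finsupp.single_apply]
    by_cases h : i = a
    · subst h
      simp only [if_true, beq_self_eq_true, ← mul_assoc, ← pow_add]
      congr 2
      omega
    · simp only [h, if_false, add_zero, beq_iff_eq, Ne.symm h, ← mul_assoc,
        ((hf a).pow_pow (t.count i) (e a)).eq]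

theorem Finsupp.induction_add_single {ι : Type*} {motive : (ι →₀ ℕ) → Prop}
    (zero : motive 0) (add_single : ∀ K i, motive K → motive (K + Finsupp.single i 1))
    (K : ι →₀ ℕ) : motive K := by
  induction K using Finsupp.induction with
  | zero => exact zero
  | single_add a b f _ hb hf =>
    clear hb
    induction b with
    | zero => simpa using hf
    | succ m ihm =>
      rw [Finsupp.single_add, add_right_comm]
      exact add_single _ a ihm

theorem WellQuasiOrdered.wellFounded_of_forall_not_rel {α : Type*} {r s : α → α → Prop}
    [IsTrans α s] (hr : WellQuasiOrdered r) (hrs : ∀ a b, r a b → ¬ s b a) :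
    WellFounded s := by
  refine wellFounded_iff_isEmpty_descending_chain.2 ⟨fun ⟨f, hf⟩ => ?_⟩
  obtain ⟨m, n, hmn, hfmn⟩ := hr f
  exact hrs _ _ hfmn (Nat.rel_of_forall_rel_succ_of_lt (Function.swap s) hf hmn)

theorem MvPolynomial.derivation_mem_supported_s7 {σ R : Type*} [CommSemiring R]
    (D : Derivation R (MvPolynomial σ R) (MvPolynomial σ R)) {s t : Set σ} (hst : s ⊆ t)
    (hX : ∀ v ∈ s, D (X v) ∈ supported R t) {f : MvPolynomial σ R}
    (hf : f ∈ supported R s) : D f ∈ supported R t := by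
  rw [supported_eq_adjoin_X] at hf
  induction hf using Algebra.adjoin_induction with
  | mem x hx =>
    obtain ⟨v, hv, rfl⟩ := hx
    exact hX v hv
  | algebraMap r => rw [D.map_algebraMap]; exact zero_mem _
  | add x y _ _ hx hy => rw [map_add]; exact add_mem hx hy
  | mul x y hx' hy' hx hy =>
    rw [← supported_eq_adjoin_X] at hx' hy'
    rw [Derivation.leibniz, smul_eq_mul, smul_eq_mul]
    exact add_mem (mul_mem (supported_mono hst hx') hy) (mul_mem (supported_mono hst hy') hx)

lemma totalD_X_inl (i j : Fin p) :
    totalD p q i (X (Sum.inl j)) = if i = j then 1 else 0 :=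
  mkDerivation_X _ _ _

lemma totalD_X_inr (i : Fin p) (α : Fin q) (K : Fin p →₀ ℕ) :
    totalD p q i (X (Sum.inr (α, K))) = X (Sum.inr (α, K + Finsupp.single i 1)) :=
  mkDerivation_X _ _ _

lemma totalD_commute (i j : Fin p) :
    Commute (totalD p q i).toLinearMap (totalD p q j).toLinearMap := by
  have h : ⁅totalD p q i, totalD p q j⁆ = 0 := by
    refine derivation_ext fun v => ?_
    rcases v with k | ⟨α, K⟩
    · simp only [Derivation.commutator_apply, totalD_X_inl, Derivation.zero_apply]
      split_ifs <;> simp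
    · simp only [Derivation.commutator_apply, totalD_X_inr, Derivation.zero_apply,
        add_right_comm, sub_self]
  refine LinearMap.ext fun x => sub_eq_zero.mp ?_
  simpa [Derivation.commutator_apply] using DFunLike.congr_fun h x

lemma DmultiK_zero : DmultiK p q 0 = 1 := by
  simp [DmultiK]

lemma DmultiK_add_single (K : Fin p →₀ ℕ) (i : Fin p) :
    DmultiK p q (K + Finsupp.single i 1) = (totalD p q i).toLinearMap * DmultiK p q K := by
  unfold DmultiK
  rw [List.foldr_pow_add_single_mul _ i (totalD_commute i), List.count_finRange, pow_one]

lemma DmultiK_X (L : Fin p →₀ ℕ) (α : Fin q) (K : Fin p →₀ ℕ) :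
    DmultiK p q L (X (Sum.inr (α, K))) = X (Sum.inr (α, K + L)) := by
  induction L using Finsupp.induction_add_single with
  | zero => simp [DmultiK_zero]
  | add_single L i ih =>
    rw [DmultiK_add_single, Module.End.mul_apply, ih, Derivation.coeFn_coe, totalD_X_inr,
      add_assoc]

namespace OrthoSystem

variable (S : OrthoSystem p q n)

lemma rlt_trans {a b c : Fin q × (Fin p →₀ ℕ)} (hab : S.rlt a b) (hbc : S.rlt b c) :
    S.rlt a c :=
  ⟨S.rk_trans _ _ _ hab.1 hbc.1, fun hac => hab.2 (S.rk_antisymm _ _ hab.1 (hac ▸ hbc.1))⟩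

lemma rlt_add_right_s7 {a b : Fin q × (Fin p →₀ ℕ)} (L : Fin p →₀ ℕ) (h : S.rlt a b) :
    S.rlt (a.1, a.2 + L) (b.1, b.2 + L) :=
  ⟨(S.rk_compat a.1 b.1 a.2 b.2 L).1 h.1,
    fun he => h.2 (Prod.ext (Prod.ext_iff.1 he).1 (add_right_cancel (Prod.ext_iff.1 he).2))⟩

lemma rlt_add_of_ne_zero (j : Fin q) (K : Fin p →₀ ℕ) {L : Fin p →₀ ℕ} (hL : L ≠ 0) :
    S.rlt (j, K) (j, K + L) :=
  ⟨S.rk_pos j K L, fun he => hL (by simpa using (congrArg Prod.snd he).symm)⟩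

lemma rlt_wf : WellFounded S.rlt := by
  have : IsTrans _ S.rlt := ⟨fun _ _ _ => S.rlt_trans⟩
  have hwqo := (Finite.wellQuasiOrdered (α := Fin q) (· = ·)).prod
    (wellQuasiOrdered_le (α := Fin p →₀ ℕ))
  refine hwqo.wellFounded_of_forall_not_rel fun a b ⟨hj, hK⟩ hba => ?_
  obtain ⟨L, hL⟩ := le_iff_exists_add.1 hK
  have hab : S.rk a b := by
    rw [← Prod.mk.eta (p := a), ← Prod.mk.eta (p := b), ← hj, hL]
    exact S.rk_pos _ _ _
  exact hba.2 (S.rk_antisymm _ _ hba.1 hab)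

/-- Ranking of jet variables, with the independent variables `x i` below all derivatives. -/
def varLt : JetVar p q → JetVar p q → Prop :=
  Sum.Lex emptyRelation S.rlt

lemma varLt_wf : WellFounded S.varLt :=
  Sum.lex_wf emptyWf.wf S.rlt_wf

def belowSet (ρ : Fin q × (Fin p →₀ ℕ)) : Set (JetVar p q) :=
  {v | S.varLt v (Sum.inr ρ)}

lemma inl_mem_belowSet (ρ : Fin q × (Fin p →₀ ℕ)) (j : Fin p) :
    Sum.inl j ∈ S.belowSet ρ :=
  Sum.Lex.sep _ _

lemma inr_mem_belowSet {ρ a : Fin q × (Fin p →₀ ℕ)} :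
    Sum.inr a ∈ S.belowSet ρ ↔ S.rlt a ρ :=
  Sum.lex_inr_inr

lemma belowSet_subset_of_rlt {ρ ρ' : Fin q × (Fin p →₀ ℕ)} (h : S.rlt ρ ρ') :
    S.belowSet ρ ⊆ S.belowSet ρ' := by
  rintro (j | a) hv
  · exact S.inl_mem_belowSet ρ' j
  · exact S.inr_mem_belowSet.2 (S.rlt_trans (S.inr_mem_belowSet.1 hv) h)

lemma totalD_mem_supported_belowSet (i : Fin p) (j : Fin q) (K : Fin p →₀ ℕ)
    {Q : JetRing p q} (hQ : Q ∈ supported ℚ (S.belowSet (j, K))) :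
    totalD p q i Q ∈ supported ℚ (S.belowSet (j, K + Finsupp.single i 1)) := by
  have hρ : S.rlt (j, K) (j, K + Finsupp.single i 1) :=
    S.rlt_add_of_ne_zero j K (Finsupp.single_ne_zero.2 one_ne_zero)
  refine derivation_mem_supported_s7 _ (S.belowSet_subset_of_rlt hρ) (fun v hv => ?_) hQ
  rcases v with j | a
  · rw [totalD_X_inl]
    split_ifs
    exacts [one_mem _, zero_mem _]
  · rw [totalD_X_inr, X_mem_supported]
    exact S.inr_mem_belowSet.2 (S.rlt_add_right_s7 _ (S.inr_mem_belowSet.1 hv))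

lemma DmultiK_P_mem_supported_belowSet (hS : S.orthonomic) (α : Fin n) (L : Fin p →₀ ℕ) :
    DmultiK p q L (S.P α) ∈ supported ℚ (S.belowSet (S.ii α, S.JJ α + L)) := by
  induction L using Finsupp.induction_add_single with
  | zero =>
    rw [DmultiK_zero, add_zero, Module.End.one_apply, mem_supported]
    rintro (j | a) hv
    · exact S.inl_mem_belowSet _ j
    · exact S.inr_mem_belowSet.2 (hS α a hv).2
  | add_single L i ih =>
    rw [DmultiK_add_single, Module.End.mul_apply, Derivation.coeFn_coe, ← add_assoc]
    exact S.totalD_mem_supported_belowSet i _ _ ih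


open Classical in
/-- The `else 0` branch is never reached: by orthonomy, `D_L P^α` only involves variables below
`u^{i^α}_{J^α + L}`. -/
noncomputable def normVar : JetVar p q → JetRing p q :=
  S.varLt_wf.fix fun v rec => match v, rec with
    | Sum.inl j, _ => X (Sum.inl j)
    | Sum.inr jK, rec =>
      if h : S.principal jK then
        aeval (fun w => if hw : S.varLt w (Sum.inr jK) then rec w hw else 0)
          (DmultiK p q h.choose_spec.choose (S.P h.choose))
      else X (Sum.inr jK)

lemma normVar_inl (j : Fin p) : S.normVar (Sum.inl j) = X (Sum.inl j) := by
  rw [normVar, WellFounded.fix_eq]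

lemma normVar_inr_of_not_principal {jK : Fin q × (Fin p →₀ ℕ)} (h : ¬ S.principal jK) :
    S.normVar (Sum.inr jK) = X (Sum.inr jK) := by
  rw [normVar, WellFounded.fix_eq]
  exact dif_neg h

lemma normVar_inr_principal (hS : S.orthonomic) (hpass : S.passive) (α : Fin n)
    (L : Fin p →₀ ℕ) :
    S.normVar (Sum.inr (S.ii α, S.JJ α + L)) = aeval S.normVar (DmultiK p q L (S.P α)) := by
  have h : S.principal (S.ii α, S.JJ α + L) := ⟨α, L, rfl⟩
  rw [normVar, WellFounded.fix_eq]
  dsimp only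
  rw [dif_pos h, hpass _ α _ L h.choose_spec.choose_spec.symm]
  refine eval₂Hom_congr' rfl (fun w hw _ => ?_) rfl
  have hw : S.varLt w (Sum.inr (S.ii α, S.JJ α + L)) :=
    mem_supported.1 (S.DmultiK_P_mem_supported_belowSet hS α L) hw
  exact dif_pos hw

lemma aeval_normVar_of_inB {R : JetRing p q} (hR : S.inB R) : aeval S.normVar R = R := by
  conv_rhs => rw [← aeval_X_left_apply (R := ℚ) R]
  refine eval₂Hom_congr' rfl (fun w hw _ => ?_) rfl
  rcases w with j | jK
  · exact S.normVar_inl j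
  · exact S.normVar_inr_of_not_principal (hR jK hw)

lemma aeval_normVar_of_mem_diffIdeal (hS : S.orthonomic) (hpass : S.passive) {x : JetRing p q}
    (hx : x ∈ S.diffIdeal) : aeval S.normVar x = 0 := by
  induction hx using Submodule.span_induction with
  | mem x hx =>
    obtain ⟨α, L, rfl⟩ := hx
    rw [map_sub, DmultiK_X, map_sub, aeval_X, S.normVar_inr_principal hS hpass, sub_self]
  | zero => exact map_zero _
  | add x y _ _ hx hy => rw [map_add, hx, hy, add_zero]
  | smul a x _ hx => rw [smul_eq_mul, map_mul, hx, mul_zero]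

lemma eq_zero_of_inB_of_mem_diffIdeal (hS : S.orthonomic) (hpass : S.passive)
    {R : JetRing p q} (hB : S.inB R) (hI : R ∈ S.diffIdeal) : R = 0 := by
  rw [← S.aeval_normVar_of_inB hB, S.aeval_normVar_of_mem_diffIdeal hS hpass hI]

lemma totalD_mem_diffIdeal (i : Fin p) {x : JetRing p q} (hx : x ∈ S.diffIdeal) :
    totalD p q i x ∈ S.diffIdeal := by
  induction hx using Submodule.span_induction with
  | mem x hx =>
    obtain ⟨α, L, rfl⟩ := hx
    refine Ideal.subset_span ⟨α, L + Finsupp.single i 1, ?_⟩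
    rw [DmultiK_add_single, Module.End.mul_apply, Derivation.coeFn_coe]
  | zero => rw [map_zero]; exact zero_mem _
  | add x y _ _ hx hy => rw [map_add]; exact add_mem hx hy
  | smul a x hx' hx =>
    rw [smul_eq_mul, Derivation.leibniz, smul_eq_mul, smul_eq_mul]
    exact add_mem (Ideal.mul_mem_left _ _ hx) (Ideal.mul_mem_right _ _ hx')

lemma DmultiK_mem_diffIdeal (K : Fin p →₀ ℕ) {x : JetRing p q} (hx : x ∈ S.diffIdeal) :
    DmultiK p q K x ∈ S.diffIdeal := by
  induction K using Finsupp.induction_add_single with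
  | zero => rwa [DmultiK_zero]
  | add_single K i ih =>
    rw [DmultiK_add_single, Module.End.mul_apply]
    exact S.totalD_mem_diffIdeal i ih

lemma inB_sub {a b : JetRing p q} (ha : S.inB a) (hb : S.inB b) : S.inB (a - b) := by
  classical
  intro jK hjK
  rcases Finset.mem_union.1 (vars_sub_subset a hjK) with h | h
  exacts [ha jK h, hb jK h]

end OrthoSystem

/-- Differentiation is compatible with reduction: `(D_K Q)~ = (D_K Q̃)~`, i.e.
if `R₁` is a reduction of `Q`, `R₂` a reduction of `D_K Q` and `R₃` a reduction
of `D_K R₁`, then `R₂ = R₃`. -/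
theorem diff_compat_reduction (S : OrthoSystem p q n)
    (hS : S.orthonomic) (hpass : S.passive)
    (Q : JetRing p q) (K : Fin p →₀ ℕ) (R₁ R₂ R₃ : JetRing p q)
    (h₁ : S.inB R₁ ∧ Q - R₁ ∈ S.diffIdeal)
    (h₂ : S.inB R₂ ∧ DmultiK p q K Q - R₂ ∈ S.diffIdeal)
    (h₃ : S.inB R₃ ∧ DmultiK p q K R₁ - R₃ ∈ S.diffIdeal) :
    R₂ = R₃ := by
  have hdiff : R₂ - R₃
      = (DmultiK p q K R₁ - R₃) - (DmultiK p q K Q - R₂) + DmultiK p q K (Q - R₁) := by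
    rw [map_sub]
    abel
  have hI : R₂ - R₃ ∈ S.diffIdeal := by
    rw [hdiff]
    exact add_mem (sub_mem h₃.2 h₂.2) (S.DmultiK_mem_diffIdeal K h₁.2)
  exact sub_eq_zero.1 (S.eq_zero_of_inB_of_mem_diffIdeal hS hpass (S.inB_sub h₂.1 h₃.1) hI)
end
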